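/- The degenerate Fubini polynomials satisfy, for all n ≥ 1 and real x: F_{n,λ}(x) = x ∑_{k=0}^{n-1} C(n,k) (1-λ)_{n-1-k,λ} F_{k,λ}(x). -/

import Mathlib

open Finset

/-- Generalized falling factorial `(x)_{n,lam} = x(x-lam)...(x-(n-1)lam)`. -/
noncomputable def dfall (lam x : ℝ) (n : ℕ) : ℝ := ∏ i ∈ Finset.range n, (x - i * lam)

/-- Generalized rising factorial `⟨x⟩_{n,lam} = x(x+lam)...(x+(n-1)lam)`. -/
noncomputable def drise (lam x : ℝ) (n : ℕ) : ℝ := ∏ i ∈ Finset.range n, (x + i * lam)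

lemma dfall_zero (lam x : ℝ) : dfall lam x 0 = 1 := by simp [dfall]

lemma dfall_succ (lam x : ℝ) (n : ℕ) : dfall lam x (n+1) = dfall lam x n * (x - n * lam) := by
  simp [dfall, prod_range_succ]

lemma dfall_nat_one (i t : ℕ) : dfall 1 (i:ℝ) t = (i.descFactorial t : ℝ) := by
  rcases le_or_gt t i with h | h
  · rw [Nat.descFactorial_eq_prod_range, Nat.cast_prod, dfall]
    refine prod_congr rfl fun r hr => ?_
    rw [mem_range] at hr
    rw [Nat.cast_sub (le_of_lt (lt_of_lt_of_le hr h))]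
    ring
  · rw [Nat.descFactorial_eq_zero_iff_lt.2 h, Nat.cast_zero, dfall]
    apply prod_eq_zero (mem_range.2 h)
    simp

lemma dfall_vandermonde (lam a b : ℝ) (n : ℕ) : dfall lam (a+b) n
    = ∑ k ∈ range (n+1), (n.choose k : ℝ) * dfall lam a k * dfall lam b (n-k) := by
  induction n with
  | zero => simp [dfall]
  | succ n ih =>
    have key : ∀ k ∈ range (n+1),
        (n.choose k : ℝ) * dfall lam a k * dfall lam b (n-k) * ((a+b) - n*lam)
        = (n.choose k : ℝ) * (dfall lam a (k+1) * dfall lam b (n-k))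
          + (n.choose k : ℝ) * (dfall lam a k * dfall lam b (n-k+1)) := by
      intro k hk
      rw [mem_range, Nat.lt_succ_iff] at hk
      rw [dfall_succ, dfall_succ]
      have h1 : ((n - k : ℕ) : ℝ) = (n : ℝ) - k := by
        rw [Nat.cast_sub hk]
      rw [h1]; ring
    rw [dfall_succ, ih, sum_mul, sum_congr rfl key, sum_add_distrib]
    have hT2 : ∑ k ∈ range (n+1), (n.choose k : ℝ) * (dfall lam a k * dfall lam b (n-k+1)) =
        ∑ k ∈ range (n+2), (n.choose k : ℝ) * (dfall lam a k * dfall lam b (n+1-k)) := by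
      rw [sum_range_succ (fun k => (n.choose k : ℝ) * (dfall lam a k * dfall lam b (n+1-k))) (n+1)]
      rw [Nat.choose_succ_self, Nat.cast_zero, zero_mul, add_zero]
      refine sum_congr rfl fun k hk => ?_
      rw [mem_range, Nat.lt_succ_iff] at hk
      have h2 : n + 1 - k = n - k + 1 := by omega
      rw [h2]
    rw [hT2]
    rw [sum_range_succ' (fun k => ((n+1).choose k : ℝ) * dfall lam a k * dfall lam b (n+1-k)) (n+1)]
    rw [sum_range_succ' (fun k => (n.choose k : ℝ) * (dfall lam a k * dfall lam b (n+1-k))) (n+1)]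
    simp only [Nat.choose_succ_succ, Nat.cast_add, Nat.succ_sub_succ_eq_sub, Nat.choose_zero_right,
      Nat.cast_one, Nat.sub_zero, dfall_zero]
    have hsplit : ∀ x ∈ range (n+1),
        ((n.choose x : ℝ) + (n.choose (x+1) : ℝ)) * dfall lam a (x+1) * dfall lam b (n-x)
        = (n.choose x : ℝ) * (dfall lam a (x+1) * dfall lam b (n-x))
          + (n.choose (x+1) : ℝ) * (dfall lam a (x+1) * dfall lam b (n-x)) := by
      intro x _; ring
    rw [sum_congr rfl hsplit, sum_add_distrib]
    ring

lemma alt_sum_choose {N : ℕ} (hN : N ≠ 0) :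
    ∑ j ∈ range (N+1), (-1:ℝ)^j * (N.choose j : ℝ) = 0 := by
  have h := add_pow (-1 : ℝ) 1 N
  simp only [one_pow, mul_one, neg_add_cancel] at h
  rw [← h, zero_pow hN]

noncomputable def cc (lam : ℝ) (n j : ℕ) : ℝ :=
  ∑ i ∈ range (j+1), (-1:ℝ)^(j+i) * (j.choose i : ℝ) * dfall lam i n

lemma sumB (k m : ℕ) :
    ∑ i ∈ range (k+1), (-1:ℝ)^(k+i) * (k.choose i : ℝ) * (i.descFactorial m : ℝ)
    = if m = k then (k.factorial : ℝ) else 0 := by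
  rcases lt_trichotomy m k with h | h | h
  · rw [if_neg (by omega)]
    -- split range (k+1) at m
    have hsplit : range (k+1) = Ico 0 (k+1) := by rw [range_eq_Ico]
    rw [hsplit, ← sum_Ico_consecutive _ (Nat.zero_le m) (by omega : m ≤ k+1)]
    have h1 : ∑ i ∈ Ico 0 m, (-1:ℝ)^(k+i) * (k.choose i : ℝ) * (i.descFactorial m : ℝ) = 0 := by
      refine sum_eq_zero fun i hi => ?_
      rw [mem_Ico] at hi
      rw [Nat.descFactorial_eq_zero_iff_lt.2 (by omega)]
      simp
    rw [h1, zero_add, sum_Ico_eq_sum_range]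
    have h2 : k + 1 - m = (k - m) + 1 := by omega
    rw [h2]
    have h3 : ∀ j ∈ range (k - m + 1),
        (-1:ℝ)^(k+(m+j)) * (k.choose (m+j) : ℝ) * ((m+j).descFactorial m : ℝ)
        = ((m.factorial : ℝ) * (k.choose m : ℝ) * (-1:ℝ)^(k+m)) * ((-1:ℝ)^j * ((k-m).choose j : ℝ)) := by
      intro j hj
      rw [mem_range] at hj
      rw [Nat.descFactorial_eq_factorial_mul_choose]
      have hcm : k.choose (m+j) * (m+j).choose m = k.choose m * (k - m).choose j := by
        have := Nat.choose_mul (n := k) (show m ≤ m + j by omega)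
        simpa using this
      have hcast : (k.choose (m+j) : ℝ) * ((m+j).choose m : ℝ) = (k.choose m : ℝ) * ((k-m).choose j : ℝ) := by
        exact_mod_cast congrArg (Nat.cast (R := ℝ)) hcm
      have hpow : (-1:ℝ)^(k+(m+j)) = (-1:ℝ)^(k+m) * (-1:ℝ)^j := by
        rw [← pow_add]; ring_nf
      push_cast
      rw [hpow]
      linear_combination ((-1:ℝ)^(k+m) * (-1:ℝ)^j * (m.factorial:ℝ)) * hcast
    rw [sum_congr rfl h3, ← mul_sum, alt_sum_choose (show k - m ≠ 0 by omega), mul_zero]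
  · subst h
    rw [if_pos rfl, sum_range_succ]
    have h1 : ∑ i ∈ range m, (-1:ℝ)^(m+i) * (m.choose i : ℝ) * (i.descFactorial m : ℝ) = 0 := by
      refine sum_eq_zero fun i hi => ?_
      rw [mem_range] at hi
      rw [Nat.descFactorial_eq_zero_iff_lt.2 hi]
      simp
    rw [h1, zero_add, Nat.descFactorial_self, Nat.choose_self, ← two_mul, pow_mul]
    norm_num
  · rw [if_neg (by omega)]
    refine sum_eq_zero fun i hi => ?_
    rw [mem_range] at hi
    rw [Nat.descFactorial_eq_zero_iff_lt.2 (by omega)]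
    simp

lemma lemD (lam : ℝ) (n j : ℕ) :
    ∑ k ∈ range (n+1), (n.choose k : ℝ) * dfall lam 1 (n-k) * cc lam k j
      = cc lam n (j+1) + cc lam n j := by
  have step1 : ∑ k ∈ range (n+1), (n.choose k : ℝ) * dfall lam 1 (n-k) * cc lam k j
      = ∑ i ∈ range (j+1), (-1:ℝ)^(j+i) * (j.choose i : ℝ) * dfall lam ((i:ℝ)+1) n := by
    have h0 : ∀ k ∈ range (n+1), (n.choose k : ℝ) * dfall lam 1 (n-k) * cc lam k j
        = ∑ i ∈ range (j+1), (-1:ℝ)^(j+i) * (j.choose i : ℝ)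
            * ((n.choose k : ℝ) * dfall lam i k * dfall lam 1 (n-k)) := by
      intro k _
      unfold cc
      rw [mul_sum]
      exact sum_congr rfl fun i _ => by ring
    rw [sum_congr rfl h0, sum_comm]
    refine sum_congr rfl fun i _ => ?_
    rw [dfall_vandermonde lam (i:ℝ) 1 n, mul_sum]
  rw [step1]
  have hBfull1 : ∑ i ∈ range (j+2), (-1:ℝ)^(j+1+i) * (j.choose i : ℝ) * dfall lam i n
      = - cc lam n j := by
    rw [sum_range_succ, Nat.choose_succ_self, Nat.cast_zero, mul_zero, zero_mul, add_zero]
    unfold cc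
    rw [← Finset.sum_neg_distrib]
    refine sum_congr rfl fun i _ => ?_
    rw [show j+1+i = (j+i)+1 by omega, pow_succ]
    ring
  have hB2 : ∑ i ∈ range (j+1), (-1:ℝ)^(j+i) * (j.choose (i+1) : ℝ) * dfall lam ((i:ℝ)+1) n
      + (-1:ℝ)^(j+1) * dfall lam 0 n = - cc lam n j := by
    rw [← hBfull1, sum_range_succ' (fun i => (-1:ℝ)^(j+1+i) * (j.choose i : ℝ) * dfall lam i n) (j+1)]
    congr 1
    · refine sum_congr rfl fun i _ => ?_
      rw [show j+1+(i+1) = (j+i)+2 by omega, pow_add]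
      push_cast
      ring
    · simp
  have hcc1 : cc lam n (j+1)
      = ∑ i ∈ range (j+1), ((-1:ℝ)^(j+i) * (j.choose i : ℝ) * dfall lam ((i:ℝ)+1) n
          + (-1:ℝ)^(j+i) * (j.choose (i+1) : ℝ) * dfall lam ((i:ℝ)+1) n)
        + (-1:ℝ)^(j+1) * dfall lam 0 n := by
    unfold cc
    rw [sum_range_succ' (fun i => (-1:ℝ)^(j+1+i) * ((j+1).choose i : ℝ) * dfall lam i n) (j+1)]
    congr 1
    · refine sum_congr rfl fun i _ => ?_
      rw [show j+1+(i+1) = (j+i)+2 by omega, pow_add, Nat.choose_succ_succ, Nat.cast_add]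
      push_cast
      ring
    · simp
  rw [hcc1, sum_add_distrib]
  have := hB2
  linarith [hB2]

lemma cc_eq (lam : ℝ) (S : ℕ → ℕ → ℝ)
    (hS : ∀ (n : ℕ) (x : ℝ), dfall lam x n = ∑ k ∈ Finset.range (n + 1), S n k * dfall 1 x k)
    (n m : ℕ) : cc lam n m = if m ≤ n then S n m * (m.factorial : ℝ) else 0 := by
  unfold cc
  have h1 : ∀ i ∈ range (m+1), (-1:ℝ)^(m+i) * (m.choose i : ℝ) * dfall lam i n
      = ∑ t ∈ range (n+1), S n t * ((-1:ℝ)^(m+i) * (m.choose i : ℝ) * (i.descFactorial t : ℝ)) := by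
    intro i _
    rw [hS n i, mul_sum]
    refine sum_congr rfl fun t _ => ?_
    rw [dfall_nat_one]
    ring
  rw [sum_congr rfl h1, sum_comm]
  have h2 : ∀ t ∈ range (n+1),
      ∑ i ∈ range (m+1), S n t * ((-1:ℝ)^(m+i) * (m.choose i : ℝ) * (i.descFactorial t : ℝ))
      = if t = m then S n t * (m.factorial : ℝ) else 0 := by
    intro t _
    rw [← mul_sum, sumB m t]
    split_ifs <;> simp
  rw [sum_congr rfl h2, sum_ite_eq' (range (n+1)) m (fun t => S n t * (m.factorial : ℝ))]
  simp [Nat.lt_succ_iff]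

lemma dfall_one_shift (lam : ℝ) (m : ℕ) : dfall lam 1 (m+1) = dfall lam (1 - lam) m := by
  unfold dfall
  rw [prod_range_succ']
  push_cast
  simp only [zero_mul, sub_zero, mul_one]
  exact prod_congr rfl fun i _ => by ring

lemma cc_zero (lam : ℝ) {n : ℕ} (hn : 1 ≤ n) : cc lam n 0 = 0 := by
  unfold cc
  simp only [range_one, sum_singleton, pow_zero, Nat.choose_self, Nat.cast_one, one_mul,
    Nat.cast_zero, zero_add, Nat.cast_ofNat]
  unfold dfall
  apply prod_eq_zero (mem_range.2 (by omega : 0 < n))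
  simp

theorem stmt17 (lam : ℝ) (S : ℕ → ℕ → ℝ)
    (hS : ∀ (n : ℕ) (x : ℝ), dfall lam x n = ∑ k ∈ Finset.range (n + 1), S n k * dfall 1 x k)
    (F : ℕ → ℝ → ℝ)
    (hF : ∀ (n : ℕ) (x : ℝ), F n x = ∑ k ∈ Finset.range (n + 1), S n k * (k.factorial : ℝ) * x ^ k) (n : ℕ) (hn : 1 ≤ n) (x : ℝ) :
    F n x = x * ∑ k ∈ Finset.range n,
      (n.choose k : ℝ) * dfall lam (1 - lam) (n - 1 - k) * F k x := by
  have hc : ∀ (m k : ℕ), cc lam m k = if k ≤ m then S m k * (k.factorial : ℝ) else 0 :=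
    cc_eq lam S hS
  have hFs : ∀ m : ℕ, F m x = ∑ j ∈ range (m+1), cc lam m j * x^j := by
    intro m
    rw [hF]
    refine sum_congr rfl fun k hk => ?_
    rw [mem_range, Nat.lt_succ_iff] at hk
    rw [hc m k, if_pos hk]
  have hshift : ∀ k ∈ range n, (n.choose k : ℝ) * dfall lam (1-lam) (n-1-k) * F k x
      = (n.choose k : ℝ) * dfall lam 1 (n-k) * F k x := by
    intro k hk
    rw [mem_range] at hk
    rw [show n - k = (n-1-k)+1 by omega, dfall_one_shift]
  rw [sum_congr rfl hshift]
  have hTot : ∑ k ∈ range (n+1), (n.choose k : ℝ) * dfall lam 1 (n-k) * F k x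
      = ∑ k ∈ range n, (n.choose k : ℝ) * dfall lam 1 (n-k) * F k x + F n x := by
    rw [sum_range_succ]
    simp [dfall_zero]
  have hkey : F n x + x * F n x
      = x * ∑ k ∈ range (n+1), (n.choose k : ℝ) * dfall lam 1 (n-k) * F k x := by
    have hFs2 : ∀ k ∈ range (n+1), (n.choose k : ℝ) * dfall lam 1 (n-k) * F k x
        = ∑ j ∈ range (n+1), ((n.choose k : ℝ) * dfall lam 1 (n-k) * cc lam k j) * x^j := by
      intro k hk
      rw [mem_range, Nat.lt_succ_iff] at hk
      calc (n.choose k : ℝ) * dfall lam 1 (n-k) * F k x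
          = ∑ j ∈ range (k+1), ((n.choose k : ℝ) * dfall lam 1 (n-k) * cc lam k j) * x^j := by
            rw [hFs k, mul_sum]
            exact sum_congr rfl fun j _ => by ring
        _ = ∑ j ∈ range (n+1), ((n.choose k : ℝ) * dfall lam 1 (n-k) * cc lam k j) * x^j := by
            apply sum_subset (range_subset_range.2 (by omega))
            intro j hj hj'
            rw [mem_range] at hj'
            rw [hc k j, if_neg (by omega)]
            ring
    rw [sum_congr rfl hFs2, sum_comm]
    have h3 : ∀ j ∈ range (n+1),
        ∑ k ∈ range (n+1), ((n.choose k : ℝ) * dfall lam 1 (n-k) * cc lam k j) * x^j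
        = (cc lam n (j+1) + cc lam n j) * x^j := by
      intro j _
      rw [← sum_mul, lemD]
    rw [sum_congr rfl h3, mul_sum]
    have h4 : ∀ j ∈ range (n+1), x * ((cc lam n (j+1) + cc lam n j) * x^j)
        = cc lam n (j+1) * x^(j+1) + cc lam n j * x^(j+1) := by
      intro j _
      ring
    rw [sum_congr rfl h4, sum_add_distrib]
    have h5 : ∑ j ∈ range (n+1), cc lam n (j+1) * x^(j+1) = F n x := by
      have e := sum_range_succ' (fun j => cc lam n j * x^j) (n+1)
      rw [sum_range_succ (fun j => cc lam n j * x^j) (n+1)] at e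
      simp only [hc n (n+1), if_neg (by omega : ¬ n+1 ≤ n), cc_zero lam hn, zero_mul,
        pow_zero, add_zero, mul_one] at e
      rw [hFs n]
      linarith [e]
    have h6 : ∑ j ∈ range (n+1), cc lam n j * x^(j+1) = x * F n x := by
      rw [hFs n, mul_sum]
      exact sum_congr rfl fun j _ => by ring
    rw [h5, h6]
  rw [hTot] at hkey
  linarith [hkey]
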